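/- For every morphism φ: T → Bir(P^n) from a k-variety T, there exists a finite stratification T = V_1 ∪ ⋯ ∪ V_ℓ by pairwise disjoint locally closed subsets such that the function t ↦ deg(φ_t) is constant on each V_j, j = 1,…,ℓ. -/

import Mathlib

open MvPolynomial

/-- The rational function field `k(z_1,…,z_n)`, realized as the fraction field of the
polynomial ring in `n` variables over `k`. -/
abbrev RatFunField (k : Type) [Field k] (n : ℕ) : Type :=
  FractionRing (MvPolynomial (Fin n) k)

/-- The Cremona group `Bir(ℙⁿ)`, realized as the group of `k`-algebra automorphisms of
the rational function field `k(z_1,…,z_n)`. -/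
abbrev Cremona (k : Type) [Field k] (n : ℕ) : Type :=
  RatFunField k n ≃ₐ[k] RatFunField k n

variable (k : Type) [Field k]

/-- The coordinate function `z_{j+1}` of `k(z_1,…,z_n)`. -/
noncomputable def zCoord (n : ℕ) (j : Fin n) : RatFunField k n :=
  algebraMap (MvPolynomial (Fin n) k) (RatFunField k n) (X j)

/-- Dehomogenization: `g(x_0,…,x_n) ↦ g(1, z_1, …, z_n)`. -/
noncomputable def dehom (n : ℕ) : MvPolynomial (Fin (n + 1)) k →ₐ[k] RatFunField k n :=
  aeval (Fin.cons 1 (zCoord k n))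

/-- `g = (g_0,…,g_n)` is a representation of the Cremona transformation `f` by homogeneous
polynomials of degree `d`: the `g_i` are homogeneous of degree `d`, `g_0 ≠ 0`, and
`f(z_j) = g_j(1,z_1,…,z_n)/g_0(1,z_1,…,z_n)` for all `j`. -/
def Represents (n : ℕ) (f : Cremona k n) (d : ℕ)
    (g : Fin (n + 1) → MvPolynomial (Fin (n + 1)) k) : Prop :=
  (∀ i, (g i).IsHomogeneous d) ∧ g 0 ≠ 0 ∧
    ∀ j : Fin n, f (zCoord k n j) * dehom k n (g 0) = dehom k n (g j.succ)

/-- The (algebraic) degree of a Cremona transformation: the least `d ≥ 1` such that `f`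
admits a representation by homogeneous polynomials of degree `d` (without common factor,
which is automatic at the minimal degree). -/
noncomputable def cdeg (n : ℕ) (f : Cremona k n) : ℕ :=
  sInf {d | 1 ≤ d ∧ ∃ g, Represents k n f d g}

/-- An affine `k`-variety: the maximal spectrum (= set of `k`-points) of a finitely
generated `k`-algebra `A`. -/
structure AffSource (k : Type) [Field k] : Type 1 where
  A : Type
  [cr : CommRing A]
  [alg : Algebra k A]
  [ft : Algebra.FiniteType k A]

attribute [instance] AffSource.cr AffSource.alg AffSource.ft

/-- The points (with residue field `k`) of an affine `k`-variety, i.e. the `k`-algebra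
homomorphisms `A → k`; by the Nullstellensatz these correspond to the maximal ideals. -/
abbrev AffSource.Pts (S : AffSource k) : Type := S.A →ₐ[k] k

/-- The Zariski topology on the points of an affine variety, induced from the Zariski
topology of the prime spectrum via `t ↦ ker t`. -/
noncomputable instance AffSource.ptsTopology (S : AffSource k) : TopologicalSpace S.Pts :=
  TopologicalSpace.induced
    (fun t : S.Pts =>
      (⟨RingHom.ker (t : S.A →+* k), RingHom.ker_isPrime _⟩ : PrimeSpectrum S.A))
    inferInstance

/-- `φ` is given by the polynomial family `F = (F_0,…,F_n)`, homogeneous of common degree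
`ℓ` in `x_0,…,x_n` with coefficients in `A`, on the basic open subset `D(a)`: for every
point `t` with `a(t) ≠ 0`, the evaluated polynomials `F_i(t,·)` are not all zero and
`φ_t(z_j)·F_0(t,1,z_1,…,z_n) = F_j(t,1,z_1,…,z_n)` for all `j`. -/
def IsFamilyOn (n : ℕ) (S : AffSource k) (φ : S.Pts → Cremona k n) (a : S.A)
    (ℓ : ℕ) (F : Fin (n + 1) → MvPolynomial (Fin (n + 1)) S.A) : Prop :=
  (∀ i, (F i).IsHomogeneous ℓ) ∧
    ∀ t : S.Pts, t a ≠ 0 →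
      (∃ i, MvPolynomial.map (t : S.A →+* k) (F i) ≠ 0) ∧
        ∀ j : Fin n,
          φ t (zCoord k n j) * dehom k n (MvPolynomial.map (t : S.A →+* k) (F 0)) =
            dehom k n (MvPolynomial.map (t : S.A →+* k) (F j.succ))

/-- A morphism `T → Bir(ℙⁿ)` from an affine `k`-variety `T`: a map which, locally on a
cover of `T` by basic open subsets, is given by a polynomial family of Cremona
transformations. -/
def IsMorphism (n : ℕ) (S : AffSource k) (φ : S.Pts → Cremona k n) : Prop :=
  ∀ t : S.Pts, ∃ a : S.A, t a ≠ 0 ∧ ∃ ℓ F, IsFamilyOn k n S φ a ℓ F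

/-- The Zariski topology on the Cremona group: the finest topology making every morphism
from a `k`-variety to `Bir(ℙⁿ)` continuous.  (A subset is closed if and only if its
preimage under every such morphism is closed.) -/
noncomputable instance cremonaTopology (n : ℕ) : TopologicalSpace (Cremona k n) :=
  ⨆ (S : AffSource k) (φ : { φ : S.Pts → Cremona k n // IsMorphism k n S φ }),
    TopologicalSpace.coinduced φ.1 inferInstance

/-!
On a chart `D(a)` where `φ` is given by a family `F` of degree `ℓ`, `φ_t` admits a representation
of degree `d` iff the linear system `F_{j+1}(t)·g_0 = F_0(t)·g_{j+1}` in the coefficients of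
homogeneous `g_0, …, g_n` of degree `d` has a nonzero solution, i.e. iff all maximal minors of
its coefficient matrix vanish at `t`. That matrix has entries in `A`, so `{t | deg φ_t ≤ d}` is
closed: the degree is lower semicontinuous. It is at most `ℓ + 1` on each chart, and finitely many
charts cover the quasi-compact `T`, so the finitely many level sets of the degree form the
required stratification.
-/

open scoped Matrix

namespace Matrix

variable {ι κ K : Type*} [Fintype ι] [Fintype κ] [DecidableEq κ] [Field K]

theorem exists_det_submatrix_ne_zero {M : Matrix ι κ K} (hM : ∀ v, v ≠ 0 → M *ᵥ v ≠ 0) :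
    ∃ r : κ → ι, (M.submatrix r id).det ≠ 0 := by
  obtain ⟨ρ, a, ha, hspan, hli⟩ := exists_linearIndependent' K M.row
  have : Fintype ρ := Fintype.ofInjective a ha
  have hinj : Function.Injective M.mulVecLin :=
    LinearMap.ker_eq_bot.mp (LinearMap.ker_eq_bot'.mpr fun v => not_imp_not.mp (hM v))
  have hcard : Fintype.card ρ = Fintype.card κ := by
    rw [linearIndependent_iff_card_eq_finrank_span.mp hli, Set.finrank, hspan,
      ← rank_eq_finrank_span_row, rank, LinearMap.finrank_range_of_inj hinj,
      Module.finrank_fintype_fun_eq_card]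
  let e : κ ≃ ρ := (Fintype.equivOfCardEq hcard).symm
  refine ⟨a ∘ e, ?_⟩
  rw [← isUnit_iff_ne_zero, ← isUnit_iff_isUnit_det, ← linearIndependent_rows_iff_isUnit]
  exact hli.comp e e.injective

theorem exists_mulVec_eq_zero_iff_forall_det_submatrix (M : Matrix ι κ K) :
    (∃ v ≠ 0, M *ᵥ v = 0) ↔ ∀ r : κ → ι, (M.submatrix r id).det = 0 := by
  constructor
  · rintro ⟨v, hv, hMv⟩ r
    refine exists_mulVec_eq_zero_iff.mp ⟨v, hv, ?_⟩
    ext i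
    simpa [mulVec] using congrFun hMv (r i)
  · contrapose!
    exact exists_det_submatrix_ne_zero

end Matrix

section Stratification

variable {X : Type*} [TopologicalSpace X] {f : X → ℕ}

theorem lowerSemicontinuous_of_forall_exists_isOpen
    (h : ∀ x, ∃ U, IsOpen U ∧ x ∈ U ∧ LowerSemicontinuousOn f U) : LowerSemicontinuous f := by
  intro x y hy
  obtain ⟨U, hU, hxU, hfU⟩ := h x
  simpa [nhdsWithin_eq_nhds.mpr (hU.mem_nhds hxU)] using hfU x hxU y hy

theorem LowerSemicontinuous.isLocallyClosed_preimage_singleton (hf : LowerSemicontinuous f)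
    (d : ℕ) : IsLocallyClosed (f ⁻¹' {d}) := by
  rw [← Set.Icc_self, ← Set.Ici_inter_Iic, Set.preimage_inter, Set.inter_comm]
  refine (hf.isClosed_preimage d).isLocallyClosed.inter (IsOpen.isLocallyClosed ?_)
  cases d with
  | zero => simp
  | succ e =>
    rw [← Order.succ_eq_add_one, Order.Ici_succ]
    exact hf.isOpen_preimage e

theorem LowerSemicontinuous.exists_fin_partition_isLocallyClosed (hf : LowerSemicontinuous f)
    {B : ℕ} (hB : ∀ x, f x ≤ B) :
    ∃ (ℓ : ℕ) (V : Fin ℓ → Set X),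
      (∀ j, IsLocallyClosed (V j)) ∧
      (∀ i j, i ≠ j → Disjoint (V i) (V j)) ∧
      (⋃ j, V j) = Set.univ ∧
      ∀ j, ∃ d : ℕ, ∀ x ∈ V j, f x = d := by
  refine ⟨B + 1, fun j => f ⁻¹' {(j : ℕ)}, fun j => hf.isLocallyClosed_preimage_singleton j,
    fun i j hij => ?_, ?_, fun j => ⟨j, fun x hx => hx⟩⟩
  · exact Disjoint.preimage f (Set.disjoint_singleton.mpr (Fin.val_injective.ne hij))
  · exact Set.eq_univ_of_forall fun x =>
      Set.mem_iUnion.mpr ⟨⟨f x, Nat.lt_succ_of_le (hB x)⟩, rfl⟩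

end Stratification

theorem Finsupp.degree_eq_add_degree_tail {N : ℕ} (α : Fin (N + 1) →₀ ℕ) :
    α.degree = α 0 + α.tail.degree := by
  simp [Finsupp.degree_eq_sum, Fin.sum_univ_succ, Finsupp.tail_apply]

theorem Finsupp.tail_injOn_degree_eq {N : ℕ} (m : ℕ) :
    Set.InjOn Finsupp.tail {α : Fin (N + 1) →₀ ℕ | α.degree = m} := by
  intro α (hα : α.degree = m) β (hβ : β.degree = m) h
  have h0 : α 0 = β 0 := by
    have := α.degree_eq_add_degree_tail
    have := β.degree_eq_add_degree_tail
    rw [h] at *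
    omega
  rw [← Finsupp.cons_tail α, ← Finsupp.cons_tail β, h0, h]

namespace MvPolynomial

section Coefficients

variable {σ R S : Type*} [Fintype σ] [DecidableEq σ] [CommRing R] [CommRing S] {d : ℕ}

variable (σ) in
def exponentsOfDegree (d : ℕ) : Finset (σ →₀ ℕ) :=
  Finset.finsuppAntidiag Finset.univ d

theorem mem_exponentsOfDegree {α : σ →₀ ℕ} : α ∈ exponentsOfDegree σ d ↔ α.degree = d := by
  simp [exponentsOfDegree, Finsupp.degree_eq_sum]

variable (R d) in
noncomputable def ofCoeffs : (exponentsOfDegree σ d → R) →ₗ[R] MvPolynomial σ R :=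
  Fintype.linearCombination R fun α => monomial (α : σ →₀ ℕ) 1

theorem ofCoeffs_apply (c : exponentsOfDegree σ d → R) :
    ofCoeffs R d c = ∑ α : exponentsOfDegree σ d, monomial (α : σ →₀ ℕ) (c α) := by
  simp [ofCoeffs, Fintype.linearCombination_apply, smul_monomial]

theorem coeff_ofCoeffs (c : exponentsOfDegree σ d → R) (α : exponentsOfDegree σ d) :
    coeff α (ofCoeffs R d c) = c α := by
  rw [ofCoeffs_apply, coeff_sum, Finset.sum_eq_single α]
  · simp
  · intro β _ hβ
    rw [coeff_monomial, if_neg (Subtype.coe_injective.ne hβ)]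
  · simp

theorem isHomogeneous_ofCoeffs (c : exponentsOfDegree σ d → R) :
    (ofCoeffs R d c).IsHomogeneous d := by
  rw [ofCoeffs_apply]
  exact IsHomogeneous.sum _ _ _ fun α _ =>
    isHomogeneous_monomial _ (mem_exponentsOfDegree.mp α.2)

theorem map_ofCoeffs (f : R →+* S) (c : exponentsOfDegree σ d → R) :
    map f (ofCoeffs R d c) = ofCoeffs S d (f ∘ c) := by
  simp [ofCoeffs_apply, map_monomial]

theorem IsHomogeneous.ofCoeffs_coeff {p : MvPolynomial σ R} (hp : p.IsHomogeneous d) :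
    ofCoeffs R d (fun α => coeff α p) = p := by
  ext β
  by_cases hβ : β.degree = d
  · exact coeff_ofCoeffs _ ⟨β, mem_exponentsOfDegree.mpr hβ⟩
  · rw [(isHomogeneous_ofCoeffs _).coeff_eq_zero hβ, hp.coeff_eq_zero hβ]

theorem IsHomogeneous.eq_zero_iff_forall_coeff {p : MvPolynomial σ R} (hp : p.IsHomogeneous d) :
    p = 0 ↔ ∀ α : exponentsOfDegree σ d, coeff α p = 0 := by
  refine ⟨fun h α => by rw [h, coeff_zero], fun h => ?_⟩
  rw [← hp.ofCoeffs_coeff, _root_.funext h]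
  exact map_zero _

end Coefficients

section Dehomogenization

variable {R : Type*} [CommRing R] {N m : ℕ}

theorem aeval_cons_one_X_monomial (α : Fin (N + 1) →₀ ℕ) (c : R) :
    aeval (Fin.cons 1 X : Fin (N + 1) → MvPolynomial (Fin N) R) (monomial α c) =
      monomial α.tail c := by
  rw [aeval_monomial, monomial_eq, Finsupp.prod_fintype _ _ fun _ => pow_zero _,
    Finsupp.prod_fintype _ _ fun _ => pow_zero _, Fin.prod_univ_succ]
  simp [Finsupp.tail_apply]

theorem IsHomogeneous.coeff_tail_aeval_cons_one_X {p : MvPolynomial (Fin (N + 1)) R}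
    (hp : p.IsHomogeneous m) {β : Fin (N + 1) →₀ ℕ} (hβ : β.degree = m) :
    coeff β.tail (MvPolynomial.aeval (Fin.cons 1 X) p) = coeff β p := by
  conv_lhs => rw [← hp.ofCoeffs_coeff, ofCoeffs_apply]
  simp only [map_sum, aeval_cons_one_X_monomial, coeff_sum, coeff_monomial]
  rw [Finset.sum_eq_single ⟨β, mem_exponentsOfDegree.mpr hβ⟩ _ (by simp)]
  · simp
  · intro α _ hαβ
    refine if_neg fun h => hαβ (Subtype.ext ?_)
    exact Finsupp.tail_injOn_degree_eq m (mem_exponentsOfDegree.mp α.2) hβ h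

theorem IsHomogeneous.aeval_cons_one_X_eq_zero_iff {p : MvPolynomial (Fin (N + 1)) R}
    (hp : p.IsHomogeneous m) :
    MvPolynomial.aeval (Fin.cons 1 X : Fin (N + 1) → MvPolynomial (Fin N) R) p = 0 ↔ p = 0 := by
  refine ⟨fun h => hp.eq_zero_iff_forall_coeff.mpr fun α => ?_, fun h => by rw [h, map_zero]⟩
  rw [← hp.coeff_tail_aeval_cons_one_X (mem_exponentsOfDegree.mp α.2), h, coeff_zero]

end Dehomogenization

end MvPolynomial

namespace AffSource

variable {k} (S : AffSource k)

theorem isInducing_ker : Topology.IsInducing fun t : S.Pts =>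
    (⟨RingHom.ker (t : S.A →+* k), RingHom.ker_isPrime _⟩ : PrimeSpectrum S.A) :=
  Topology.IsInducing.induced _

instance : TopologicalSpace.NoetherianSpace S.Pts :=
  have := Algebra.FiniteType.isNoetherianRing k S.A
  S.isInducing_ker.noetherianSpace

theorem isClosed_setOf_apply_eq_zero (b : S.A) : IsClosed {t : S.Pts | t b = 0} := by
  convert (PrimeSpectrum.isClosed_zeroLocus {b}).preimage S.isInducing_ker.continuous
  ext t
  simp [PrimeSpectrum.mem_zeroLocus, RingHom.mem_ker]

theorem isClosed_setOf_exists_mulVec_map_eq_zero {ι κ : Type*} [Fintype ι] [Fintype κ]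
    [DecidableEq κ] (M : Matrix ι κ S.A) :
    IsClosed {t : S.Pts | ∃ v ≠ 0, M.map t *ᵥ v = 0} := by
  simp_rw [Matrix.exists_mulVec_eq_zero_iff_forall_det_submatrix, Set.ofPred_forall]
  refine isClosed_iInter fun r => ?_
  convert S.isClosed_setOf_apply_eq_zero (M.submatrix r id).det using 3 with t
  rw [AlgHom.map_det, AlgHom.mapMatrix_apply, Matrix.submatrix_map]

end AffSource

section Dehom

variable {k} {n m : ℕ}

theorem dehom_eq_algebraMap_aeval (p : MvPolynomial (Fin (n + 1)) k) :
    dehom k n p =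
      algebraMap (MvPolynomial (Fin n) k) (RatFunField k n) (aeval (Fin.cons 1 X) p) := by
  suffices dehom k n = (IsScalarTower.toAlgHom k _ (RatFunField k n)).comp (aeval (Fin.cons 1 X)) by
    rw [this]; rfl
  refine algHom_ext fun i => Fin.cases ?_ (fun j => ?_) i <;> simp [dehom, zCoord]

theorem MvPolynomial.IsHomogeneous.dehom_eq_zero_iff {p : MvPolynomial (Fin (n + 1)) k}
    (hp : p.IsHomogeneous m) : dehom k n p = 0 ↔ p = 0 := by
  rw [dehom_eq_algebraMap_aeval, map_eq_zero_iff _ (IsFractionRing.injective _ _),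
    hp.aeval_cons_one_X_eq_zero_iff]

theorem MvPolynomial.IsHomogeneous.dehom_inj {p q : MvPolynomial (Fin (n + 1)) k}
    (hp : p.IsHomogeneous m) (hq : q.IsHomogeneous m) : dehom k n p = dehom k n q ↔ p = q := by
  rw [← sub_eq_zero, ← map_sub, (hp.sub hq).dehom_eq_zero_iff, sub_eq_zero]

theorem dehom_X_zero : dehom k n (X 0) = 1 := by
  rw [dehom, aeval_X, Fin.cons_zero]

end Dehom

section Relations

variable {R S : Type*} [CommRing R] [CommRing S] {n ℓ d : ℕ}

noncomputable def tupleOfCoeffs (c : Fin (n + 1) × exponentsOfDegree (Fin (n + 1)) d → R)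
    (i : Fin (n + 1)) : MvPolynomial (Fin (n + 1)) R :=
  ofCoeffs R d fun α => c (i, α)

theorem isHomogeneous_tupleOfCoeffs (c : Fin (n + 1) × exponentsOfDegree (Fin (n + 1)) d → R)
    (i : Fin (n + 1)) : (tupleOfCoeffs c i).IsHomogeneous d :=
  isHomogeneous_ofCoeffs _

theorem tupleOfCoeffs_coeff {g : Fin (n + 1) → MvPolynomial (Fin (n + 1)) R}
    (hg : ∀ i, (g i).IsHomogeneous d) : tupleOfCoeffs (d := d) (fun p => coeff p.2 (g p.1)) = g :=
  funext fun i => (hg i).ofCoeffs_coeff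

theorem tupleOfCoeffs_eq_zero_iff {c : Fin (n + 1) × exponentsOfDegree (Fin (n + 1)) d → R} :
    tupleOfCoeffs c = 0 ↔ c = 0 := by
  refine ⟨fun h => funext fun p => ?_, fun h => ?_⟩
  · rw [← coeff_ofCoeffs (fun α => c (p.1, α)) p.2]
    exact (congrArg (coeff p.2) (congrFun h p.1)).trans (coeff_zero _)
  · subst h
    exact funext fun i => map_zero (ofCoeffs R d)

variable (ℓ d) in
noncomputable def relMap (F : Fin (n + 1) → MvPolynomial (Fin (n + 1)) R) :
    (Fin (n + 1) × exponentsOfDegree (Fin (n + 1)) d → R) →ₗ[R]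
      (Fin n × exponentsOfDegree (Fin (n + 1)) (ℓ + d) → R) :=
  LinearMap.pi fun p => lcoeff R (p.2 : Fin (n + 1) →₀ ℕ) ∘ₗ
    (LinearMap.mulLeft R (F p.1.succ) ∘ₗ ofCoeffs R d ∘ₗ LinearMap.funLeft R R (Prod.mk 0) -
      LinearMap.mulLeft R (F 0) ∘ₗ ofCoeffs R d ∘ₗ LinearMap.funLeft R R (Prod.mk p.1.succ))

theorem relMap_apply (F : Fin (n + 1) → MvPolynomial (Fin (n + 1)) R)
    (c : Fin (n + 1) × exponentsOfDegree (Fin (n + 1)) d → R)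
    (p : Fin n × exponentsOfDegree (Fin (n + 1)) (ℓ + d)) :
    relMap ℓ d F c p =
      coeff p.2 (F p.1.succ * tupleOfCoeffs c 0 - F 0 * tupleOfCoeffs c p.1.succ) :=
  rfl

theorem relMap_eq_zero_iff {F : Fin (n + 1) → MvPolynomial (Fin (n + 1)) R}
    (hF : ∀ i, (F i).IsHomogeneous ℓ) (c : Fin (n + 1) × exponentsOfDegree (Fin (n + 1)) d → R) :
    relMap ℓ d F c = 0 ↔
      ∀ j : Fin n, F j.succ * tupleOfCoeffs c 0 = F 0 * tupleOfCoeffs c j.succ := by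
  simp only [funext_iff, Prod.forall, relMap_apply, Pi.zero_apply]
  refine forall_congr' fun j => ?_
  rw [← sub_eq_zero, (((hF _).mul (isHomogeneous_tupleOfCoeffs c 0)).sub
    ((hF 0).mul (isHomogeneous_tupleOfCoeffs c _))).eq_zero_iff_forall_coeff]

variable (ℓ d) in
noncomputable def relMatrix (F : Fin (n + 1) → MvPolynomial (Fin (n + 1)) R) :
    Matrix (Fin n × exponentsOfDegree (Fin (n + 1)) (ℓ + d))
      (Fin (n + 1) × exponentsOfDegree (Fin (n + 1)) d) R :=
  LinearMap.toMatrix' (relMap ℓ d F)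

theorem relMatrix_map (F : Fin (n + 1) → MvPolynomial (Fin (n + 1)) R) (f : R →+* S) :
    (relMatrix ℓ d F).map f = relMatrix ℓ d fun i => map f (F i) := by
  ext p q
  simp only [relMatrix, Matrix.map_apply, LinearMap.toMatrix'_apply, relMap_apply, tupleOfCoeffs,
    ← coeff_map, map_sub, map_mul, map_ofCoeffs]
  congr 5 <;> exact funext fun α => by simp [Pi.single_apply, apply_ite f]

end Relations

section Represents

variable {k} {n : ℕ} {f : Cremona k n} {ℓ d e : ℕ}
  {G g : Fin (n + 1) → MvPolynomial (Fin (n + 1)) k}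

theorem Represents.mono (h : Represents k n f d g) (hde : d ≤ e) :
    Represents k n f e fun i => X 0 ^ (e - d) * g i := by
  obtain ⟨hg, hg0, hrel⟩ := h
  refine ⟨fun i => ?_, mul_ne_zero (pow_ne_zero _ (X_ne_zero 0)) hg0, fun j => ?_⟩
  · simpa [Nat.sub_add_cancel hde] using (isHomogeneous_X_pow (0 : Fin (n + 1)) (e - d)).mul (hg i)
  · simpa [dehom_X_zero] using hrel j

theorem Represents.cdeg_le_iff (hG : Represents k n f ℓ G) (d : ℕ) :
    cdeg k n f ≤ d ↔ 1 ≤ d ∧ ∃ g, Represents k n f d g := by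
  have hne : {d | 1 ≤ d ∧ ∃ g, Represents k n f d g}.Nonempty :=
    ⟨ℓ + 1, Nat.le_add_left 1 ℓ, _, hG.mono (Nat.le_succ ℓ)⟩
  refine ⟨fun h => ?_, fun h => Nat.sInf_le h⟩
  obtain ⟨h1, g, hg⟩ := Nat.sInf_mem hne
  exact ⟨h1.trans h, _, hg.mono h⟩

theorem Represents.cdeg_le (hG : Represents k n f ℓ G) : cdeg k n f ≤ ℓ + 1 :=
  (hG.cdeg_le_iff _).mpr ⟨Nat.le_add_left 1 ℓ, _, hG.mono (Nat.le_succ ℓ)⟩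

theorem Represents.represents_iff_mul_eq_mul (hG : Represents k n f ℓ G)
    (hg : ∀ i, (g i).IsHomogeneous d) (hg0 : g 0 ≠ 0) :
    Represents k n f d g ↔ ∀ j : Fin n, G j.succ * g 0 = G 0 * g j.succ := by
  have hG0 : dehom k n (G 0) ≠ 0 := fun h => hG.2.1 (((hG.1 0).dehom_eq_zero_iff).mp h)
  simp only [Represents, hg, hg0, implies_true, ne_eq, not_false_eq_true, true_and]
  refine forall_congr' fun j => ?_
  rw [← ((hG.1 _).mul (hg 0)).dehom_inj ((hG.1 0).mul (hg _)), map_mul, map_mul, ← hG.2.2 j,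
    mul_right_comm, mul_comm (dehom k n (G 0)), mul_left_inj' hG0]

theorem Represents.exists_represents_iff (hG : Represents k n f ℓ G) :
    (∃ g, Represents k n f d g) ↔ ∃ c ≠ 0, relMap ℓ d G c = 0 := by
  constructor
  · rintro ⟨g, hg⟩
    refine ⟨fun p => coeff p.2 (g p.1), fun hc => hg.2.1 ?_, ?_⟩
    · rw [← tupleOfCoeffs_coeff hg.1, tupleOfCoeffs_eq_zero_iff.mpr hc, Pi.zero_apply]
    · rw [relMap_eq_zero_iff hG.1, tupleOfCoeffs_coeff hg.1]
      exact (hG.represents_iff_mul_eq_mul hg.1 hg.2.1).mp hg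
  · rintro ⟨c, hc, hrel⟩
    rw [relMap_eq_zero_iff hG.1] at hrel
    -- `G 0 ≠ 0`, so a solution with vanishing first entry vanishes entirely
    have hc0 : tupleOfCoeffs c 0 ≠ 0 := by
      refine fun h0 => hc (tupleOfCoeffs_eq_zero_iff.mp (funext fun i => Fin.cases h0 ?_ i))
      intro j
      simpa [h0, hG.2.1] using (hrel j).symm
    exact ⟨_, (hG.represents_iff_mul_eq_mul (isHomogeneous_tupleOfCoeffs c) hc0).mpr hrel⟩

end Represents

section Family

variable {k} {n : ℕ} {S : AffSource k} {φ : S.Pts → Cremona k n} {a : S.A} {ℓ : ℕ}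
  {F : Fin (n + 1) → MvPolynomial (Fin (n + 1)) S.A}

theorem IsFamilyOn.represents (hF : IsFamilyOn k n S φ a ℓ F) {t : S.Pts} (ht : t a ≠ 0) :
    Represents k n (φ t) ℓ fun i => map (t : S.A →+* k) (F i) := by
  obtain ⟨⟨i, hi⟩, hrel⟩ := hF.2 t ht
  have hFt : ∀ i, (map (t : S.A →+* k) (F i)).IsHomogeneous ℓ := fun i => (hF.1 i).map _
  refine ⟨hFt, fun h0 => hi ?_, hrel⟩
  refine Fin.cases h0 (fun j => ?_) i
  rw [← (hFt _).dehom_eq_zero_iff, ← hrel j, show map (t : S.A →+* k) (F 0) = 0 from h0, map_zero,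
    mul_zero]

theorem IsFamilyOn.cdeg_le_iff (hF : IsFamilyOn k n S φ a ℓ F) {t : S.Pts} (ht : t a ≠ 0)
    (d : ℕ) :
    cdeg k n (φ t) ≤ d ↔ 1 ≤ d ∧ ∃ c ≠ 0, (relMatrix ℓ d F).map t *ᵥ c = 0 := by
  rw [(hF.represents ht).cdeg_le_iff, (hF.represents ht).exists_represents_iff,
    ← AlgHom.coe_toRingHom, relMatrix_map]
  simp only [relMatrix, LinearMap.toMatrix'_mulVec]

theorem IsFamilyOn.lowerSemicontinuousOn_cdeg (hF : IsFamilyOn k n S φ a ℓ F) :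
    LowerSemicontinuousOn (fun t => cdeg k n (φ t)) {t | t a ≠ 0} := by
  refine lowerSemicontinuousOn_iff_preimage_Iic.mpr fun d => ⟨{_t | 1 ≤ d} ∩ _,
    isClosed_const.inter (S.isClosed_setOf_exists_mulVec_map_eq_zero (relMatrix ℓ d F)), ?_⟩
  ext t
  simp only [Set.mem_inter_iff, Set.mem_preimage, Set.mem_Iic]
  exact and_congr_right fun ht => hF.cdeg_le_iff ht d

theorem IsMorphism.lowerSemicontinuous_cdeg (hφ : IsMorphism k n S φ) :
    LowerSemicontinuous fun t => cdeg k n (φ t) :=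
  lowerSemicontinuous_of_forall_exists_isOpen fun t =>
    have ⟨a, ha, _, _, hF⟩ := hφ t
    ⟨_, (S.isClosed_setOf_apply_eq_zero a).isOpen_compl, ha, hF.lowerSemicontinuousOn_cdeg⟩

theorem IsMorphism.exists_cdeg_le (hφ : IsMorphism k n S φ) :
    ∃ B, ∀ t, cdeg k n (φ t) ≤ B := by
  choose a ha ℓ F hF using hφ
  obtain ⟨s, hs⟩ := CompactSpace.elim_nhds_subcover (fun t => {t' : S.Pts | t' (a t) ≠ 0})
    fun t => (S.isClosed_setOf_apply_eq_zero (a t)).isOpen_compl.mem_nhds (ha t)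
  refine ⟨s.sup fun t => ℓ t + 1, fun t' => ?_⟩
  obtain ⟨t, hts, ht' : t' (a t) ≠ 0⟩ := Set.mem_iUnion₂.mp (hs.ge (Set.mem_univ t'))
  exact ((hF t).represents ht').cdeg_le.trans (Finset.le_sup (f := fun t => ℓ t + 1) hts)

end Family

theorem exists_stratification_deg_constant_general (k : Type) [Field k]
    (n : ℕ) (S : AffSource k) (φ : S.Pts → Cremona k n)
    (hφ : IsMorphism k n S φ) :
    ∃ (ℓ : ℕ) (V : Fin ℓ → Set S.Pts),
      (∀ j, IsLocallyClosed (V j)) ∧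
      (∀ i j, i ≠ j → Disjoint (V i) (V j)) ∧
      (⋃ j, V j) = Set.univ ∧
      ∀ j, ∃ d : ℕ, ∀ t ∈ V j, cdeg k n (φ t) = d :=
  have ⟨_, hB⟩ := hφ.exists_cdeg_le
  hφ.lowerSemicontinuous_cdeg.exists_fin_partition_isLocallyClosed hB

/-- For every morphism `φ : T → Bir(ℙⁿ)` from a `k`-variety there is a finite
stratification of `T` by pairwise disjoint locally closed subsets on each of which
`t ↦ deg(φ_t)` is constant. -/
theorem exists_stratification_deg_constant (k : Type) [Field k] [IsAlgClosed k]
    (n : ℕ) (hn : 1 ≤ n) (S : AffSource k) (φ : S.Pts → Cremona k n)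
    (hφ : IsMorphism k n S φ) :
    ∃ (ℓ : ℕ) (V : Fin ℓ → Set S.Pts),
      (∀ j, IsLocallyClosed (V j)) ∧
      (∀ i j, i ≠ j → Disjoint (V i) (V j)) ∧
      (⋃ j, V j) = Set.univ ∧
      ∀ j, ∃ d : ℕ, ∀ t ∈ V j, cdeg k n (φ t) = d :=
  exists_stratification_deg_constant_general k n S φ hφ
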